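/- arXiv:1809.07383 — 3 statements merged into one kernel-verified Lean document; each statement's English description precedes it below -/
import Mathlib

section
/- Let W be a mixing matrix as in the context and let Λ = Diag(α_1, …, α_n) with α_i > 0 for all i. Then a vector x* = (x_1*, …, x_n*) is a Nash equilibrium of Γ if and only if there exists a matrix X* ∈ Ω_a with diagonal vector diag(X*) = x* such that ⟨(I − W)X* + Λ F̃(X*), X − X*⟩_Fro ≥ 0 for all X ∈ Ω_a. -/
/-- `x` is a Nash equilibrium of the game with action sets `Ω i ⊆ ℝ` and costs `J i`. -/
def IsNashEq {n : ℕ} (Ω : Fin n → Set ℝ) (J : Fin n → (Fin n → ℝ) → ℝ) (x : Fin n → ℝ) : Prop :=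
  (∀ i, x i ∈ Ω i) ∧ ∀ i : Fin n, ∀ t ∈ Ω i, J i x ≤ J i (Function.update x i t)

/-- The diagonal matrix `F̃(X) = Diag(∂J_i/∂x_i(x_(i)))`, where `x_(i)` is the `i`-th row of `X`
and `F x i = ∂J_i/∂x_i (x)`. -/
noncomputable def Ftil {n : ℕ} (F : (Fin n → ℝ) → Fin n → ℝ)
    (X : Matrix (Fin n) (Fin n) ℝ) : Matrix (Fin n) (Fin n) ℝ :=
  Matrix.diagonal fun i => F (X i) i

/-- Frobenius inner product of two real matrices. -/
noncomputable def frob {n : ℕ} (A B : Matrix (Fin n) (Fin n) ℝ) : ℝ :=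
  ∑ i, ∑ j, A i j * B i j

/-!
Since the constraint `X ∈ Ω_a` only involves the diagonal of `X`, the variational inequality
over `Ω_a` forces `M = (I - W)X* + Λ F̃(X*)` to be diagonal and reduces, on the diagonal, to
the scalar first-order conditions `α_i F_i (t - x*_i) ≥ 0` for `t ∈ Ω_i`. As `Λ F̃(X*)` is
diagonal, so is `(I - W)X*`; its column sums vanish because those of `I - W` do, hence
`(I - W)X* = 0`, i.e. every column of `X*` lies in `null(I - W) = span 𝟙`: all rows of `X*`
equal `x*`. Then `F̃(X*) = Diag(F_i(x*))`, and for convex costs the scalar first-order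
conditions characterise the Nash equilibrium.
-/

open Matrix

section FirstOrder

variable {g : ℝ → ℝ} {d a t : ℝ} {S : Set ℝ}

lemma IsMinOn.deriv_mul_sub_nonneg (hmin : IsMinOn g S a) (hS : Convex ℝ S) (ha : a ∈ S)
    (ht : t ∈ S) (hd : HasDerivAt g d a) : 0 ≤ d * (t - a) := by
  simpa [mul_comm] using hmin.localize.hasFDerivWithinAt_nonneg hd.hasFDerivAt.hasFDerivWithinAt
    (sub_mem_posTangentConeAt_of_segment_subset (hS.segment_subset ha ht))

lemma ConvexOn.add_deriv_mul_sub_le (hg : ConvexOn ℝ S g) (ha : a ∈ S) (ht : t ∈ S)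
    (hd : HasDerivAt g d a) : g a + d * (t - a) ≤ g t := by
  rcases lt_trichotomy a t with h | rfl | h
  · have := hg.le_slope_of_hasDerivAt ha ht h hd
    rw [slope_def_field, le_div_iff₀ (sub_pos.2 h)] at this
    linarith
  · simp
  · have := hg.slope_le_of_hasDerivAt ht ha h hd
    rw [slope_def_field, div_le_iff₀ (sub_pos.2 h)] at this
    linarith

end FirstOrder

section Frobenius

variable {n : ℕ}

lemma frob_single (M : Matrix (Fin n) (Fin n) ℝ) (i j : Fin n) (c : ℝ) :
    frob M (single i j c) = M i j * c := by
  simp [frob, single_apply, ite_and]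

lemma frob_eq_sum_diag_of_isDiag {M : Matrix (Fin n) (Fin n) ℝ} (hM : M.IsDiag)
    (X : Matrix (Fin n) (Fin n) ℝ) : frob M X = ∑ i, M i i * X i i := by
  refine Finset.sum_congr rfl fun i _ => ?_
  exact Finset.sum_eq_single i (fun j _ hj => by simp [hM hj.symm]) (by simp)

lemma forall_frob_sub_nonneg_iff {Ω : Fin n → Set ℝ} {M Y : Matrix (Fin n) (Fin n) ℝ}
    (hY : ∀ i, Y i i ∈ Ω i) :
    (∀ X : Matrix (Fin n) (Fin n) ℝ, (∀ i, X i i ∈ Ω i) → 0 ≤ frob M (X - Y)) ↔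
      M.IsDiag ∧ ∀ i, ∀ t ∈ Ω i, 0 ≤ M i i * (t - Y i i) := by
  constructor
  · intro h
    have hsingle : ∀ i j c, Y i i + single i j c i i ∈ Ω i → 0 ≤ M i j * c := by
      intro i j c hc
      have hX : ∀ k, (Y + single i j c) k k ∈ Ω k := by
        intro k
        by_cases hk : k = i
        · subst hk; simpa using hc
        · simpa [single_apply, Ne.symm hk] using hY k
      simpa [frob_single] using h _ hX
    refine ⟨fun i j hij => ?_, fun i t ht => ?_⟩
    · have := hsingle i j (-M i j) (by simpa [single_apply, hij.symm] using hY i)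
      nlinarith
    · exact hsingle i i (t - Y i i) (by simpa using ht)
  · rintro ⟨hM, hdiag⟩ X hX
    rw [frob_eq_sum_diag_of_isDiag hM]
    exact Finset.sum_nonneg fun i _ => by simpa using hdiag i _ (hX i)

end Frobenius

section Kernel

variable {R m : Type*} [Semiring R] [Fintype m] {A X : Matrix m m R}

lemma mul_eq_zero_iff_eq_replicateRow_diag
    (hA : ∀ v : m → R, A *ᵥ v = 0 ↔ ∃ c : R, v = fun _ => c) :
    A * X = 0 ↔ X = replicateRow m X.diag := by
  have hcol : ∀ q, A *ᵥ (fun k => X k q) = fun i => (A * X) i q := fun q => by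
    ext i; simp [mulVec, mul_apply, dotProduct]
  constructor
  · intro h
    ext p q
    obtain ⟨c, hc⟩ := (hA _).1 ((hcol q).trans (by rw [h]; rfl))
    simp [congrFun hc p, congrFun hc q]
  · intro h
    ext i q
    have hconst : (fun k => X k q) = fun _ => X q q := funext fun k => by
      rw [h]; rfl
    exact congrFun ((hcol q).symm.trans ((hA _).2 ⟨_, hconst⟩)) i

lemma mul_eq_zero_of_isDiag (hA : 1 ᵥ* A = 0) (h : (A * X).IsDiag) : A * X = 0 := by
  have hsum : 1 ᵥ* (A * X) = 0 := by rw [← vecMul_vecMul, hA, zero_vecMul]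
  ext i j
  by_cases hij : i = j
  · subst hij
    have := congrFun hsum i
    simp only [vecMul, dotProduct, Pi.one_apply, one_mul, Pi.zero_apply] at this
    rwa [Finset.sum_eq_single i (fun k _ hk => h hk) (by simp)] at this
  · exact h hij

end Kernel
theorem statement4_general {n : ℕ} (Ω : Fin n → Set ℝ) (J : Fin n → (Fin n → ℝ) → ℝ)
    (F : (Fin n → ℝ) → Fin n → ℝ)
    (hΩcv : ∀ i, Convex ℝ (Ω i))
    (hconv : ∀ (i : Fin n) (x : Fin n → ℝ),
      ConvexOn ℝ (Set.univ : Set ℝ) fun t : ℝ => J i (Function.update x i t))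
    (hder : ∀ (i : Fin n) (x : Fin n → ℝ),
      HasDerivAt (fun t : ℝ => J i (Function.update x i t)) (F x i) (x i))
    (W : Matrix (Fin n) (Fin n) ℝ)
    (hWcol : ∀ j, ∑ i, W i j = 1)
    (hWnull : ∀ v : Fin n → ℝ,
      Matrix.mulVec ((1 : Matrix (Fin n) (Fin n) ℝ) - W) v = 0 ↔ ∃ c : ℝ, v = fun _ => c)
    (α : Fin n → ℝ) (hα : ∀ i, 0 < α i)
    (xs : Fin n → ℝ) :
    IsNashEq Ω J xs ↔
      ∃ Xs : Matrix (Fin n) (Fin n) ℝ, (∀ i, Xs i i ∈ Ω i) ∧ (∀ i, Xs i i = xs i) ∧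
        ∀ X : Matrix (Fin n) (Fin n) ℝ, (∀ i, X i i ∈ Ω i) →
          0 ≤ frob (((1 : Matrix (Fin n) (Fin n) ℝ) - W) * Xs + Matrix.diagonal α * Ftil F Xs)
                (X - Xs) := by
  have hFtil : Ftil F (replicateRow (Fin n) xs) = diagonal fun i => F xs i := rfl
  constructor
  · rintro ⟨hmem, hmin⟩
    refine ⟨replicateRow (Fin n) xs, hmem, fun _ => rfl, ?_⟩
    have hLX : (1 - W) * replicateRow (Fin n) xs = 0 :=
      (mul_eq_zero_iff_eq_replicateRow_diag hWnull).2 rfl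
    rw [forall_frob_sub_nonneg_iff (Y := replicateRow (Fin n) xs) hmem, hLX, zero_add, hFtil,
      diagonal_mul_diagonal]
    refine ⟨isDiag_diagonal _, fun i t ht => ?_⟩
    have hFOC := IsMinOn.deriv_mul_sub_nonneg (g := fun t => J i (Function.update xs i t))
      (fun u hu => by simpa using hmin i u hu) (hΩcv i) (hmem i) ht (hder i xs)
    simpa [mul_assoc] using mul_nonneg (hα i).le hFOC
  · rintro ⟨Xs, hXsΩ, hXsdiag, hVI⟩
    obtain ⟨hM, hdiag⟩ := (forall_frob_sub_nonneg_iff hXsΩ).1 hVI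
    have hL1 : 1 ᵥ* (1 - W) = 0 := by
      ext j; simp [vecMul, dotProduct, one_apply, hWcol]
    have hLX : (1 - W) * Xs = 0 := mul_eq_zero_of_isDiag hL1 <| by
      simpa [Ftil, diagonal_mul_diagonal] using hM.sub (isDiag_diagonal (fun i => α i * F (Xs i) i))
    obtain rfl : Xs = replicateRow (Fin n) xs :=
      ((mul_eq_zero_iff_eq_replicateRow_diag hWnull).1 hLX).trans (congrArg _ (funext hXsdiag))
    refine ⟨hXsΩ, fun i t ht => ?_⟩
    have hFOC : 0 ≤ α i * (F xs i * (t - xs i)) := by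
      simpa [hLX, hFtil, mul_assoc] using hdiag i t ht
    have hTangent :=
      (hconv i xs).add_deriv_mul_sub_le (Set.mem_univ _) (Set.mem_univ t) (hder i xs)
    simp only [Function.update_eq_self] at hTangent
    linarith [(mul_nonneg_iff_of_pos_left (hα i)).1 hFOC]

/-- `x*` is a Nash equilibrium iff there is an estimation matrix `X* ∈ Ω_a`
with diagonal `x*` such that `⟨(I - W)X* + Λ F̃(X*), X - X*⟩_Fro ≥ 0` for all `X ∈ Ω_a`. -/
theorem statement4 {n : ℕ} (Ω : Fin n → Set ℝ) (J : Fin n → (Fin n → ℝ) → ℝ)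
    (F : (Fin n → ℝ) → Fin n → ℝ)
    (hΩne : ∀ i, (Ω i).Nonempty) (hΩcl : ∀ i, IsClosed (Ω i)) (hΩcv : ∀ i, Convex ℝ (Ω i))
    (hconv : ∀ (i : Fin n) (x : Fin n → ℝ),
      ConvexOn ℝ (Set.univ : Set ℝ) fun t : ℝ => J i (Function.update x i t))
    (hder : ∀ (i : Fin n) (x : Fin n → ℝ),
      HasDerivAt (fun t : ℝ => J i (Function.update x i t)) (F x i) (x i))
    (W : Matrix (Fin n) (Fin n) ℝ) (hWsym : W.IsSymm) (hWnn : ∀ i j, 0 ≤ W i j)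
    (hWrow : ∀ i, ∑ j, W i j = 1) (hWcol : ∀ j, ∑ i, W i j = 1)
    (hWpsd : ((1 : Matrix (Fin n) (Fin n) ℝ) - W).PosSemidef)
    (hWnull : ∀ v : Fin n → ℝ,
      Matrix.mulVec ((1 : Matrix (Fin n) (Fin n) ℝ) - W) v = 0 ↔ ∃ c : ℝ, v = fun _ => c)
    (α : Fin n → ℝ) (hα : ∀ i, 0 < α i)
    (xs : Fin n → ℝ) :
    IsNashEq Ω J xs ↔
      ∃ Xs : Matrix (Fin n) (Fin n) ℝ, (∀ i, Xs i i ∈ Ω i) ∧ (∀ i, Xs i i = xs i) ∧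
        ∀ X : Matrix (Fin n) (Fin n) ℝ, (∀ i, X i i ∈ Ω i) →
          0 ≤ frob (((1 : Matrix (Fin n) (Fin n) ℝ) - W) * Xs + Matrix.diagonal α * Ftil F Xs)
                (X - Xs) :=
  statement4_general Ω J F hΩcv hconv hder W hWcol hWnull α hα xs
end

section
/- Assume the game mapping F is strongly monotone on ℝⁿ with constant μ_F > 0 and that for each i, ∂J_i/∂x_i(x_i, ·) is L_{-i}-Lipschitz in x_{-i}. Then for all X, Y ∈ Ω_a, ⟨Λ(F̃(X) − F̃(Y)), X − Y⟩_Fro ≥ −(1/2) · max_i { α_i (√(μ_F² + L_{-i}²) − μ_F) } · ‖X − Y‖²_Fro. -/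
/-!
Row by row, with `μ = μF` and `ℓ = L' i`. Let `x, y` be the `i`-th rows of `X, Y`, `d = x i - y i`,
`b` the distance of their off-diagonal parts, and `w` the vector `y` with its `i`-th entry replaced
by `x i`. Split `F x i - F y i = (F x i - F w i) + (F w i - F y i)`: the first part is at most `ℓ b`
in absolute value by the Lipschitz hypothesis (`x` and `w` share their `i`-th entry), and strong
monotonicity applied to `w, y`, which differ only in entry `i`, gives `μ d² ≤ (F w i - F y i) d`.
It remains that `μ d² - ℓ b |d| ≥ -(s - μ)/2 · (d² + b²)` for `s = √(μ² + ℓ²)`, i.e. that the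
quadratic form `(s + μ) d² - 2 ℓ b |d| + (s - μ) b²` is nonnegative: its determinant
`s² - μ² - ℓ²` vanishes.
-/
open Finset Matrix

lemma two_mul_mul_mul_le_sqrt_sq_add_sq (μ ℓ a b : ℝ) :
    2 * (ℓ * a * b) ≤
      (√(μ ^ 2 + ℓ ^ 2) + μ) * a ^ 2 + (√(μ ^ 2 + ℓ ^ 2) - μ) * b ^ 2 := by
  set s := √(μ ^ 2 + ℓ ^ 2)
  have hμs : |μ| ≤ s := Real.abs_le_sqrt (le_add_of_nonneg_right (sq_nonneg ℓ))
  have hp : 0 ≤ s + μ := by linarith [neg_abs_le μ]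
  have hq : 0 ≤ s - μ := by linarith [le_abs_self μ]
  have hpq : √(s + μ) * √(s - μ) = |ℓ| := by
    rw [← Real.sqrt_mul hp, ← Real.sqrt_sq_eq_abs]
    congr 1
    nlinarith [Real.sq_sqrt (add_nonneg (sq_nonneg μ) (sq_nonneg ℓ))]
  calc 2 * (ℓ * a * b) ≤ 2 * ((√(s + μ) * |a|) * (√(s - μ) * |b|)) := by
        have : ℓ * a * b ≤ |ℓ| * |a| * |b| := by
          rw [← abs_mul, ← abs_mul]; exact le_abs_self _
        rw [← hpq] at this; linarith
    _ ≤ (√(s + μ) * |a|) ^ 2 + (√(s - μ) * |b|) ^ 2 := by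
        rw [← mul_assoc]; exact two_mul_le_add_sq _ _
    _ = (s + μ) * a ^ 2 + (s - μ) * b ^ 2 := by
        rw [mul_pow, mul_pow, Real.sq_sqrt hp, Real.sq_sqrt hq, sq_abs, sq_abs]

lemma neg_half_mul_le_of_abs_le_of_mul_sq_le {μ ℓ α c d B A G : ℝ} (hα : 0 ≤ α)
    (hc : α * (√(μ ^ 2 + ℓ ^ 2) - μ) ≤ c) (hA : |A| ≤ ℓ * B) (hG : μ * d ^ 2 ≤ G * d) :
    -(1 / 2 * c * (d ^ 2 + B ^ 2)) ≤ α * ((A + G) * d) := by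
  have hAd : -(ℓ * B * |d|) ≤ A * d := by
    have : |A * d| ≤ ℓ * B * |d| := by
      rw [abs_mul]; exact mul_le_mul_of_nonneg_right hA (abs_nonneg d)
    linarith [neg_abs_le (A * d)]
  have hquad := two_mul_mul_mul_le_sqrt_sq_add_sq μ ℓ |d| B
  rw [sq_abs] at hquad
  have hsum : -(√(μ ^ 2 + ℓ ^ 2) - μ) * (d ^ 2 + B ^ 2) ≤ 2 * ((A + G) * d) := by
    linarith
  nlinarith [mul_le_mul_of_nonneg_left hsum hα,
    mul_le_mul_of_nonneg_right hc (add_nonneg (sq_nonneg d) (sq_nonneg B))]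

section Row

variable {n : ℕ} {F : (Fin n → ℝ) → Fin n → ℝ} {μ : ℝ}

lemma mul_sq_le_sub_update_mul
    (hmono : ∀ u v : Fin n → ℝ, μ * ∑ i, (u i - v i) ^ 2 ≤ ∑ i, (F u i - F v i) * (u i - v i))
    (v : Fin n → ℝ) (i : Fin n) (t : ℝ) :
    μ * (t - v i) ^ 2 ≤ (F (Function.update v i t) i - F v i) * (t - v i) := by
  have h := hmono (Function.update v i t) v
  have hd : ∀ j, Function.update v i t j - v j = if j = i then t - v i else 0 := by
    intro j; by_cases hj : j = i <;> simp [hj]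
  simpa [hd, ite_pow, mul_ite] using h

lemma neg_half_mul_sum_sq_le_mul_sub_mul_sub {S : Set ℝ} {ℓ α c : ℝ} {i : Fin n}
    (hmono : ∀ u v : Fin n → ℝ, μ * ∑ i, (u i - v i) ^ 2 ≤ ∑ i, (F u i - F v i) * (u i - v i))
    (hLip : ∀ x y : Fin n → ℝ, x i = y i → x i ∈ S →
      |F x i - F y i| ≤ ℓ * √(∑ j ∈ univ.erase i, (x j - y j) ^ 2))
    (hα : 0 ≤ α) (hc : α * (√(μ ^ 2 + ℓ ^ 2) - μ) ≤ c) {u v : Fin n → ℝ} (hu : u i ∈ S) :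
    -(1 / 2 * c * ∑ j, (u j - v j) ^ 2) ≤ α * ((F u i - F v i) * (u i - v i)) := by
  set w := Function.update v i (u i)
  have hA : |F u i - F w i| ≤ ℓ * √(∑ j ∈ univ.erase i, (u j - v j) ^ 2) := by
    have hoff : ∑ j ∈ univ.erase i, (u j - w j) ^ 2 = ∑ j ∈ univ.erase i, (u j - v j) ^ 2 :=
      sum_congr rfl fun j hj => by
        rw [show w j = v j from Function.update_of_ne (ne_of_mem_erase hj) _ _]
    simpa [hoff] using hLip u w (by simp [w]) hu
  have hG := mul_sq_le_sub_update_mul hmono v i (u i)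
  have hsplit := neg_half_mul_le_of_abs_le_of_mul_sq_le hα hc hA hG
  rwa [sub_add_sub_cancel, Real.sq_sqrt (sum_nonneg fun j _ => sq_nonneg _),
    add_sum_erase _ (fun j => (u j - v j) ^ 2) (mem_univ i)] at hsplit

end Row

lemma frob_diagonal_left {n : ℕ} (v : Fin n → ℝ) (M : Matrix (Fin n) (Fin n) ℝ) :
    frob (diagonal v) M = ∑ i, v i * M i i := by
  simp [frob, diagonal_apply]

lemma frob_self {n : ℕ} (M : Matrix (Fin n) (Fin n) ℝ) :
    frob M M = ∑ i, ∑ j, M i j ^ 2 := by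
  simp [frob, sq]

theorem statement7_general {n : ℕ} (Ω : Fin n → Set ℝ) (F : (Fin n → ℝ) → Fin n → ℝ)
    (L' : Fin n → ℝ)
    (μF : ℝ)
    (hmono : ∀ u v : Fin n → ℝ,
      μF * ∑ i, (u i - v i) ^ 2 ≤ ∑ i, (F u i - F v i) * (u i - v i))
    (hLip2 : ∀ (i : Fin n) (x y : Fin n → ℝ), x i = y i → x i ∈ Ω i →
      |F x i - F y i| ≤ L' i * Real.sqrt (∑ j ∈ Finset.univ.erase i, (x j - y j) ^ 2))
    (α : Fin n → ℝ) (hα : ∀ i, 0 < α i)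
    (cmax : ℝ)
    (hcub : ∀ i, α i * (Real.sqrt (μF ^ 2 + L' i ^ 2) - μF) ≤ cmax) :
    ∀ X Y : Matrix (Fin n) (Fin n) ℝ, (∀ i, X i i ∈ Ω i) → (∀ i, Y i i ∈ Ω i) →
      -(1 / 2 * cmax * frob (X - Y) (X - Y)) ≤
        frob (Matrix.diagonal α * (Ftil F X - Ftil F Y)) (X - Y) := by
  intro X Y hX _
  have hdiag : diagonal α * (Ftil F X - Ftil F Y)
      = diagonal fun i => α i * (F (X i) i - F (Y i) i) := by
    rw [Ftil, Ftil, diagonal_sub, diagonal_mul_diagonal]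
  rw [hdiag, frob_diagonal_left, frob_self, mul_sum, ← sum_neg_distrib]
  refine sum_le_sum fun i _ => ?_
  simpa [mul_assoc] using
    neg_half_mul_sum_sq_le_mul_sub_mul_sub hmono (hLip2 i) (hα i).le (hcub i) (hX i)

/-- if the game mapping is `μF`-strongly monotone and each partial gradient is
`L' i`-Lipschitz in the other players' variables, then for all `X, Y ∈ Ω_a`,
`⟨Λ(F̃(X) - F̃(Y)), X - Y⟩_Fro ≥ -(1/2) max_i {α i (√(μF² + L' i²) - μF)} ‖X - Y‖²_Fro`. -/
theorem statement7 {n : ℕ} (Ω : Fin n → Set ℝ) (F : (Fin n → ℝ) → Fin n → ℝ)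
    (L' : Fin n → ℝ)
    (μF : ℝ) (hμF : 0 < μF)
    (hmono : ∀ u v : Fin n → ℝ,
      μF * ∑ i, (u i - v i) ^ 2 ≤ ∑ i, (F u i - F v i) * (u i - v i))
    (hLip2 : ∀ (i : Fin n) (x y : Fin n → ℝ), x i = y i → x i ∈ Ω i →
      |F x i - F y i| ≤ L' i * Real.sqrt (∑ j ∈ Finset.univ.erase i, (x j - y j) ^ 2))
    (α : Fin n → ℝ) (hα : ∀ i, 0 < α i)
    (cmax : ℝ)
    (hcub : ∀ i, α i * (Real.sqrt (μF ^ 2 + L' i ^ 2) - μF) ≤ cmax)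
    (hcmem : ∃ i, cmax = α i * (Real.sqrt (μF ^ 2 + L' i ^ 2) - μF)) :
    ∀ X Y : Matrix (Fin n) (Fin n) ℝ, (∀ i, X i i ∈ Ω i) → (∀ i, Y i i ∈ Ω i) →
      -(1 / 2 * cmax * frob (X - Y) (X - Y)) ≤
        frob (Matrix.diagonal α * (Ftil F X - Ftil F Y)) (X - Y) :=
  statement7_general Ω F L' μF hmono hLip2 α hα cmax hcub
end

section
/- Let Q ⊆ ℝ^d be a nonempty closed convex set, g : Q → ℝ^d strongly monotone with constant μ > 0 and Lipschitz continuous with constant L ≥ μ on Q, γ = L/μ, and x* ∈ Q the unique solution of VI(Q, g). Let y⁰ ∈ Q, λ⁰ = 1, S^k = Σ_{t=0}^{k} λ^t, λ^{k+1} = S^k/γ, and define recursively x^k = P_Q( (1/S^k) Σ_{t=0}^{k} λ^t ( y^t − g(y^t)/μ ) ) and y^{k+1} = P_Q( x^k − g(x^k)/L ). Set ỹ^k = (1/S^k) Σ_{t=0}^{k} λ^t y^t. If M ∈ ℝ satisfies ⟨g(y), y⁰ − y⟩ + 0.5 μ ‖y⁰ − y‖² ≤ M for all y ∈ Q, then for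 all k ≥ 0, 0.5 μ ‖ỹ^k − x*‖² ≤ M · γ² · exp(−k/(γ + 1)). -/
/-!
The estimate functions `ψ_k(w) = ∑_{t ≤ k} λ^t (⟪g(y^t), w - y^t⟫ + μ/2 ‖w - y^t‖²)` are
quadratics of curvature `μ S^k` whose unconstrained minimiser is the point projected to get `x^k`.
Hence `x^k` minimises `ψ_k` on `Q` with margin `μ S^k / 2 ‖w - x^k‖²`, and since
`λ^{k+1} L = μ S^k` this margin pays exactly for the extragradient step producing `y^{k+1}`;
by induction `ψ_k(x^k) ≥ -M γ²`. On the other side, strong monotonicity and the variational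
inequality at the average `ỹ^k` give `ψ_k(x*) ≤ -μ S^k / 2 ‖ỹ^k - x*‖²`. Finally
`S^k = (1 + 1/γ)^k ≥ exp(k / (γ + 1))`.
-/

open scoped RealInnerProductSpace

open Finset

variable {E : Type*} [NormedAddCommGroup E] [InnerProductSpace ℝ E]

section Projection

variable {K : Set E} {c p w : E}

theorem real_inner_sub_le_zero_of_forall_norm_sub_le (hK : Convex ℝ K) (hp : p ∈ K)
    (hmin : ∀ v ∈ K, ‖c - p‖ ≤ ‖c - v‖) (hw : w ∈ K) : ⟪c - p, w - p⟫ ≤ 0 := by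
  have : Nonempty K := ⟨⟨p, hp⟩⟩
  refine (norm_eq_iInf_iff_real_inner_le_zero hK hp).1 (le_antisymm ?_ ?_) w hw
  · exact le_ciInf fun v => hmin v v.2
  · exact ciInf_le (f := fun v : K => ‖c - (v : E)‖)
      ⟨0, Set.forall_mem_range.2 fun _ => norm_nonneg _⟩ ⟨p, hp⟩

theorem norm_sub_sq_add_norm_sub_sq_le_of_forall_norm_sub_le (hK : Convex ℝ K) (hp : p ∈ K)
    (hmin : ∀ v ∈ K, ‖c - p‖ ≤ ‖c - v‖) (hw : w ∈ K) :
    ‖w - p‖ ^ 2 + ‖c - p‖ ^ 2 ≤ ‖w - c‖ ^ 2 := by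
  have h := real_inner_sub_le_zero_of_forall_norm_sub_le hK hp hmin hw
  rw [show w - c = (w - p) - (c - p) by abel, norm_sub_sq_real (w - p), real_inner_comm]
  linarith

end Projection

theorem Finset.sum_mul_norm_sub_sq_eq {ι : Type*} (s : Finset ι) (a : ι → ℝ) (z : ι → E) (w : E)
    (hs : ∑ i ∈ s, a i ≠ 0) :
    ∑ i ∈ s, a i * ‖w - z i‖ ^ 2 =
      (∑ i ∈ s, a i) * ‖w - s.centerMass a z‖ ^ 2 + ∑ i ∈ s, a i * ‖s.centerMass a z - z i‖ ^ 2 := by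
  set c := s.centerMass a z
  have hc : ∑ i ∈ s, a i • (c - z i) = 0 := by
    simp only [smul_sub, sum_sub_distrib, ← sum_smul, c, centerMass, smul_inv_smul₀ hs, sub_self]
  have hterm : ∀ i, a i * ‖w - z i‖ ^ 2 =
      a i * ‖w - c‖ ^ 2 + 2 * ⟪w - c, a i • (c - z i)⟫ + a i * ‖c - z i‖ ^ 2 := fun i => by
    rw [show w - z i = (w - c) + (c - z i) by abel, norm_add_sq_real, real_inner_smul_right]
    ring
  simp only [hterm, sum_add_distrib, ← mul_sum, ← inner_sum, hc, inner_zero_right, ← sum_mul]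
  ring

theorem extragradient_step {K : Set E} (hK : Convex ℝ K) {g : E → E} {L : ℝ} (hL : 0 < L)
    {x p w : E} (hp : p ∈ K) (hpmin : ∀ v ∈ K, ‖x - L⁻¹ • g x - p‖ ≤ ‖x - L⁻¹ • g x - v‖)
    (hlip : ‖g p - g x‖ ≤ L * ‖p - x‖) (hw : w ∈ K) :
    0 ≤ L / 2 * ‖w - x‖ ^ 2 + ⟪g p, w - p⟫ := by
  have hproj : L * ⟪x - p, w - p⟫ ≤ ⟪g x, w - p⟫ := by
    have h := real_inner_sub_le_zero_of_forall_norm_sub_le hK hp hpmin hw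
    rw [sub_right_comm, inner_sub_left, real_inner_smul_left] at h
    have := mul_le_mul_of_nonneg_left h hL.le
    rwa [mul_sub, ← mul_assoc, mul_inv_cancel₀ hL.ne', one_mul, mul_zero, sub_nonpos] at this
  have hCS : -(L * ‖x - p‖ * ‖w - p‖) ≤ ⟪g p - g x, w - p⟫ := by
    have := (abs_real_inner_le_norm (g p - g x) (w - p)).trans
      (mul_le_mul_of_nonneg_right hlip (norm_nonneg _))
    rw [norm_sub_rev p x] at this
    linarith [neg_abs_le ⟪g p - g x, w - p⟫]
  -- `½‖w - x‖² + ⟪x - p, w - p⟫ = ½(‖x - p‖² + ‖w - p‖²) ≥ ‖x - p‖‖w - p‖`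
  have hpar : ‖w - x‖ ^ 2 = ‖w - p‖ ^ 2 - 2 * ⟪x - p, w - p⟫ + ‖x - p‖ ^ 2 := by
    rw [show w - x = (w - p) - (x - p) by abel, norm_sub_sq_real (w - p), real_inner_comm]
  have hamgm := mul_nonneg hL.le (sq_nonneg (‖x - p‖ - ‖w - p‖))
  rw [show g p = (g p - g x) + g x by abel, inner_add_left]
  nlinarith

noncomputable section Model

variable (g : E → E) (μ : ℝ)

def viModel (y w : E) : ℝ := ⟪g y, w - y⟫ + μ / 2 * ‖w - y‖ ^ 2

def viEstimate (lam : ℕ → ℝ) (y : ℕ → E) (k : ℕ) (w : E) : ℝ :=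
  ∑ t ∈ range (k + 1), lam t * viModel g μ (y t) w

variable {g μ}

theorem viModel_eq (hμ : μ ≠ 0) (y w : E) :
    viModel g μ y w = μ / 2 * ‖w - (y - μ⁻¹ • g y)‖ ^ 2 - ‖g y‖ ^ 2 / (2 * μ) := by
  rw [viModel, show w - (y - μ⁻¹ • g y) = (w - y) + μ⁻¹ • g y by abel, norm_add_sq_real,
    real_inner_smul_right, norm_smul, mul_pow, Real.norm_eq_abs, sq_abs, real_inner_comm]
  field_simp
  ring

theorem viModel_le_of_strongMono {x y : E} (h : μ * ‖y - x‖ ^ 2 ≤ ⟪g y - g x, y - x⟫) :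
    viModel g μ y x ≤ ⟪g x, x - y⟫ - μ / 2 * ‖x - y‖ ^ 2 := by
  rw [viModel, ← neg_sub y x, inner_neg_right, inner_neg_right, norm_neg, inner_sub_left] at *
  linarith

theorem neg_mul_sq_le_viModel {L M : ℝ} {x y w : E} (hμ : 0 < μ) (hμL : μ ≤ L)
    (hlip : ‖g y - g x‖ ≤ L * ‖y - x‖) (hy : 0 ≤ ⟪g x, y - x⟫) (hw : 0 ≤ ⟪g x, w - x⟫)
    (hM : ⟪g x, y - x⟫ + μ / 2 * ‖y - x‖ ^ 2 ≤ M) :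
    -(M * (L / μ) ^ 2) ≤ viModel g μ y w := by
  set γ := L / μ
  have hL : L = γ * μ := (div_mul_cancel₀ L hμ.ne').symm
  have hγ : 1 ≤ γ ^ 2 := one_le_pow₀ ((one_le_div hμ).2 hμL)
  have hCS : -(L * ‖y - x‖ * ‖w - y‖) ≤ ⟪g y - g x, w - y⟫ := by
    have := (abs_real_inner_le_norm (g y - g x) (w - y)).trans
      (mul_le_mul_of_nonneg_right hlip (norm_nonneg _))
    linarith [neg_abs_le ⟪g y - g x, w - y⟫]
  have hsplit : ⟪g y, w - y⟫ = ⟪g y - g x, w - y⟫ + ⟪g x, w - x⟫ - ⟪g x, y - x⟫ := by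
    rw [inner_sub_left, add_sub_assoc, ← inner_sub_right, sub_sub_sub_cancel_right]
    ring
  rw [viModel, hsplit]
  rw [hL] at hCS
  nlinarith [mul_nonneg (sq_nonneg γ) (sub_nonneg.2 hM), mul_nonneg (sub_nonneg.2 hγ) hy,
    mul_nonneg hμ.le (sq_nonneg (γ * ‖y - x‖ - ‖w - y‖))]

variable {lam : ℕ → ℝ} {y : ℕ → E} {k : ℕ}

theorem viEstimate_eq_add_const (hμ : μ ≠ 0) (hS : ∑ t ∈ range (k + 1), lam t ≠ 0) :
    ∃ C, ∀ w, viEstimate g μ lam y k w = μ / 2 * (∑ t ∈ range (k + 1), lam t) *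
      ‖w - (range (k + 1)).centerMass lam (fun t => y t - μ⁻¹ • g (y t))‖ ^ 2 + C := by
  set z := fun t => y t - μ⁻¹ • g (y t)
  set c := (range (k + 1)).centerMass lam z
  refine ⟨μ / 2 * ∑ t ∈ range (k + 1), lam t * ‖c - z t‖ ^ 2 -
    ∑ t ∈ range (k + 1), lam t * (‖g (y t)‖ ^ 2 / (2 * μ)), fun w => ?_⟩
  have hsplit : viEstimate g μ lam y k w = μ / 2 * ∑ t ∈ range (k + 1), lam t * ‖w - z t‖ ^ 2 -
      ∑ t ∈ range (k + 1), lam t * (‖g (y t)‖ ^ 2 / (2 * μ)) := by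
    rw [viEstimate, mul_sum, ← sum_sub_distrib]
    exact sum_congr rfl fun t _ => by rw [viModel_eq hμ]; ring
  rw [hsplit, sum_mul_norm_sub_sq_eq _ _ _ _ hS]
  ring

theorem viEstimate_add_le {K : Set E} (hK : Convex ℝ K) (hμ : 0 < μ)
    (hS : 0 < ∑ t ∈ range (k + 1), lam t) {p w : E} (hp : p ∈ K)
    (hpmin : ∀ v ∈ K, ‖(range (k + 1)).centerMass lam (fun t => y t - μ⁻¹ • g (y t)) - p‖ ≤
      ‖(range (k + 1)).centerMass lam (fun t => y t - μ⁻¹ • g (y t)) - v‖)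
    (hw : w ∈ K) :
    viEstimate g μ lam y k p + μ * (∑ t ∈ range (k + 1), lam t) / 2 * ‖w - p‖ ^ 2 ≤
      viEstimate g μ lam y k w := by
  obtain ⟨C, hC⟩ := viEstimate_eq_add_const (g := g) (y := y) hμ.ne' hS.ne'
  have hpyth := mul_le_mul_of_nonneg_left
    (norm_sub_sq_add_norm_sub_sq_le_of_forall_norm_sub_le hK hp hpmin hw)
    (by positivity : 0 ≤ μ / 2 * ∑ t ∈ range (k + 1), lam t)
  rw [hC, hC, norm_sub_rev p]
  linarith

theorem mul_norm_centerMass_sub_sq_le_neg_viEstimate (hμ : 0 ≤ μ) (hlam : ∀ t, 0 ≤ lam t)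
    (hS : 0 < ∑ t ∈ range (k + 1), lam t) {xs : E}
    (hmono : ∀ t, μ * ‖y t - xs‖ ^ 2 ≤ ⟪g (y t) - g xs, y t - xs⟫)
    (hVI : 0 ≤ ⟪g xs, (range (k + 1)).centerMass lam y - xs⟫) :
    μ / 2 * (∑ t ∈ range (k + 1), lam t) * ‖(range (k + 1)).centerMass lam y - xs‖ ^ 2 ≤
      -viEstimate g μ lam y k xs := by
  set s := range (k + 1)
  set ym := s.centerMass lam y
  have hmodel : viEstimate g μ lam y k xs ≤
      ∑ t ∈ s, lam t * ⟪g xs, xs - y t⟫ - μ / 2 * ∑ t ∈ s, lam t * ‖xs - y t‖ ^ 2 := by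
    rw [mul_sum, ← sum_sub_distrib]
    exact sum_le_sum fun t _ => by
      nlinarith [mul_le_mul_of_nonneg_left (viModel_le_of_strongMono (hmono t)) (hlam t)]
  have hlin : ∑ t ∈ s, lam t * ⟪g xs, xs - y t⟫ = -((∑ t ∈ s, lam t) * ⟪g xs, ym - xs⟫) := by
    have hmass : ∑ t ∈ s, lam t • y t = (∑ t ∈ s, lam t) • ym := (smul_inv_smul₀ hS.ne' _).symm
    simp only [← real_inner_smul_right, ← inner_sum, smul_sub, sum_sub_distrib, ← sum_smul,
      hmass, ← inner_neg_right, neg_sub]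
  have hvar := sum_mul_norm_sub_sq_eq s lam y xs hS.ne'
  have hdev : 0 ≤ ∑ t ∈ s, lam t * ‖ym - y t‖ ^ 2 :=
    sum_nonneg fun t _ => mul_nonneg (hlam t) (sq_nonneg _)
  rw [norm_sub_rev xs ym] at hvar
  nlinarith [mul_nonneg hS.le hVI]

theorem viEstimate_zero (w : E) : viEstimate g μ lam y 0 w = lam 0 * viModel g μ (y 0) w := by
  simp [viEstimate]

theorem viEstimate_succ (w : E) : viEstimate g μ lam y (k + 1) w =
    viEstimate g μ lam y k w + lam (k + 1) * viModel g μ (y (k + 1)) w :=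
  sum_range_succ _ _

theorem le_viEstimate_of_step {L B : ℝ} {x : ℕ → E} {S : ℕ → ℝ} (hμ : 0 ≤ μ)
    (hlam0 : lam 0 = 1) (hlam : ∀ t, 0 ≤ lam t) (hlamL : ∀ k, lam (k + 1) * L = μ * S k)
    (hbase : B ≤ viModel g μ (y 0) (x 0))
    (hmin : ∀ k, viEstimate g μ lam y k (x k) + μ * S k / 2 * ‖x (k + 1) - x k‖ ^ 2 ≤
      viEstimate g μ lam y k (x (k + 1)))
    (hstep : ∀ k,
      0 ≤ L / 2 * ‖x (k + 1) - x k‖ ^ 2 + ⟪g (y (k + 1)), x (k + 1) - y (k + 1)⟫) :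
    ∀ k, B ≤ viEstimate g μ lam y k (x k)
  | 0 => by rwa [viEstimate_zero, hlam0, one_mul]
  | k + 1 => by
    have ih := le_viEstimate_of_step hμ hlam0 hlam hlamL hbase hmin hstep k
    have hmin_k := hmin k
    rw [← hlamL k] at hmin_k
    have hstep_k := mul_nonneg (hlam (k + 1)) (hstep k)
    have hquad := mul_nonneg (mul_nonneg (hlam (k + 1)) hμ) (sq_nonneg ‖x (k + 1) - y (k + 1)‖)
    rw [viEstimate_succ, viModel]
    linarith

end Model

theorem eq_one_add_inv_pow_of_partial_sums {lam S : ℕ → ℝ} {γ : ℝ} (hlam0 : lam 0 = 1)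
    (hS : ∀ k, S k = ∑ t ∈ range (k + 1), lam t) (hlam : ∀ k, lam (k + 1) = S k / γ) :
    ∀ k, S k = (1 + γ⁻¹) ^ k
  | 0 => by simp [hS, hlam0]
  | k + 1 => by
    rw [hS, sum_range_succ, ← hS, hlam, eq_one_add_inv_pow_of_partial_sums hlam0 hS hlam k,
      pow_succ]
    ring

theorem inv_one_add_inv_pow_le_exp {γ : ℝ} (hγ : 0 < γ) (k : ℕ) :
    ((1 + γ⁻¹) ^ k)⁻¹ ≤ Real.exp (-(k : ℝ) / (γ + 1)) := by
  have hbase : (1 + γ⁻¹)⁻¹ ≤ Real.exp (-(γ + 1)⁻¹) := by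
    have : (1 + γ⁻¹)⁻¹ = -(γ + 1)⁻¹ + 1 := by field_simp; ring
    rw [this]
    exact Real.add_one_le_exp _
  calc ((1 + γ⁻¹) ^ k)⁻¹ = (1 + γ⁻¹)⁻¹ ^ k := (inv_pow _ _).symm
    _ ≤ Real.exp (-(γ + 1)⁻¹) ^ k := by gcongr
    _ = Real.exp (-(k : ℝ) / (γ + 1)) := by rw [← Real.exp_nat_mul]; ring_nf

theorem statement13_general {d : ℕ} (Q : Set (EuclideanSpace ℝ (Fin d)))
    (hQcv : Convex ℝ Q)
    (g : EuclideanSpace ℝ (Fin d) → EuclideanSpace ℝ (Fin d))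
    (μ L : ℝ) (hμ : 0 < μ) (hμL : μ ≤ L)
    (hmono : ∀ u ∈ Q, ∀ v ∈ Q, μ * ‖u - v‖ ^ 2 ≤ ⟪g u - g v, u - v⟫)
    (hlip : ∀ u ∈ Q, ∀ v ∈ Q, ‖g u - g v‖ ≤ L * ‖u - v‖)
    (P : EuclideanSpace ℝ (Fin d) → EuclideanSpace ℝ (Fin d))
    (hP : ∀ z, P z ∈ Q ∧ ∀ y ∈ Q, ‖z - P z‖ ≤ ‖z - y‖)
    (xs : EuclideanSpace ℝ (Fin d)) (hxsQ : xs ∈ Q)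
    (hxsVI : ∀ x ∈ Q, 0 ≤ ⟪g xs, x - xs⟫)
    (lam S : ℕ → ℝ) (x y : ℕ → EuclideanSpace ℝ (Fin d))
    (hlam0 : lam 0 = 1)
    (hS : ∀ k : ℕ, S k = ∑ t ∈ Finset.range (k + 1), lam t)
    (hlam : ∀ k : ℕ, lam (k + 1) = S k / (L / μ))
    (hy0 : y 0 ∈ Q)
    (hx : ∀ k : ℕ,
      x k = P ((S k)⁻¹ • ∑ t ∈ Finset.range (k + 1), lam t • (y t - μ⁻¹ • g (y t))))
    (hy : ∀ k : ℕ, y (k + 1) = P (x k - L⁻¹ • g (x k)))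
    (M : ℝ) (hM : ∀ z ∈ Q, ⟪g z, y 0 - z⟫ + 0.5 * μ * ‖y 0 - z‖ ^ 2 ≤ M) :
    ∀ k : ℕ,
      0.5 * μ * ‖(S k)⁻¹ • (∑ t ∈ Finset.range (k + 1), lam t • y t) - xs‖ ^ 2 ≤
        M * (L / μ) ^ 2 * Real.exp (-(k : ℝ) / (L / μ + 1)) := by
  intro k
  have hL : 0 < L := hμ.trans_le hμL
  have hSpow := eq_one_add_inv_pow_of_partial_sums hlam0 hS hlam
  have hSpos : ∀ k, 0 < S k := fun k => hSpow k ▸ pow_pos (by positivity) k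
  have hlam_nonneg : ∀ t, 0 ≤ lam t := by
    rintro (_ | t)
    exacts [hlam0 ▸ zero_le_one, hlam t ▸ (div_pos (hSpos t) (div_pos hL hμ)).le]
  have hyQ : ∀ t, y t ∈ Q := by
    rintro (_ | t)
    exacts [hy0, hy t ▸ (hP _).1]
  have hxQ : ∀ k, x k ∈ Q := fun k => hx k ▸ (hP _).1
  have hmin : ∀ k, ∀ w ∈ Q, viEstimate g μ lam y k (x k) + μ * S k / 2 * ‖w - x k‖ ^ 2 ≤
      viEstimate g μ lam y k w := fun k w hw => by
    rw [hx k, hS k]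
    exact viEstimate_add_le hQcv hμ (hS k ▸ hSpos k) (hP _).1 (hP _).2 hw
  have hlower : ∀ k, -(M * (L / μ) ^ 2) ≤ viEstimate g μ lam y k (x k) :=
    le_viEstimate_of_step hμ.le hlam0 hlam_nonneg
      (fun k => by rw [hlam]; field_simp)
      (neg_mul_sq_le_viModel hμ hμL (hlip _ hy0 _ hxsQ) (hxsVI _ hy0) (hxsVI _ (hxQ 0))
        (by linarith [hM xs hxsQ]))
      (fun k => hmin k _ (hxQ (k + 1)))
      (fun k => hy k ▸ extragradient_step hQcv hL (hP _).1 (hP _).2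
        (hy k ▸ hlip _ (hyQ (k + 1)) _ (hxQ k)) (hxQ (k + 1)))
  have hupper : μ / 2 * S k * ‖(S k)⁻¹ • (∑ t ∈ Finset.range (k + 1), lam t • y t) - xs‖ ^ 2 ≤
      -viEstimate g μ lam y k xs := by
    rw [hS k]
    exact mul_norm_centerMass_sub_sq_le_neg_viEstimate hμ.le hlam_nonneg (hS k ▸ hSpos k)
      (fun t => hmono _ (hyQ t) _ hxsQ) (hxsVI _ (hQcv.centerMass_mem (fun t _ => hlam_nonneg t)
        (hS k ▸ hSpos k) fun t _ => hyQ t))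
  have hM0 : 0 ≤ M := by simpa using hM _ hy0
  calc 0.5 * μ * ‖(S k)⁻¹ • (∑ t ∈ Finset.range (k + 1), lam t • y t) - xs‖ ^ 2
      ≤ M * (L / μ) ^ 2 * (S k)⁻¹ := by
        have hSk := hSpos k
        rw [le_mul_inv_iff₀ hSk]
        linarith [hmin k xs hxsQ, hlower k, (by positivity : 0 ≤ μ * S k / 2 * ‖xs - x k‖ ^ 2)]
    _ ≤ M * (L / μ) ^ 2 * Real.exp (-(k : ℝ) / (L / μ + 1)) := by
        rw [hSpow]
        gcongr
        exact inv_one_add_inv_pow_le_exp (by positivity) k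

/-- Theorem 3 of Nesterov–Scrimali: convergence of the accelerated gradient
scheme for a strongly monotone Lipschitz variational inequality over a nonempty closed convex
set `Q ⊆ ℝ^d`, with `γ = L/μ`. Here `P` is the nearest-point projection onto `Q` and `M`
bounds the merit function at `y⁰`. -/
theorem statement13 {d : ℕ} (Q : Set (EuclideanSpace ℝ (Fin d)))
    (hQne : Q.Nonempty) (hQcl : IsClosed Q) (hQcv : Convex ℝ Q)
    (g : EuclideanSpace ℝ (Fin d) → EuclideanSpace ℝ (Fin d))
    (μ L : ℝ) (hμ : 0 < μ) (hμL : μ ≤ L)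
    (hmono : ∀ u ∈ Q, ∀ v ∈ Q, μ * ‖u - v‖ ^ 2 ≤ ⟪g u - g v, u - v⟫)
    (hlip : ∀ u ∈ Q, ∀ v ∈ Q, ‖g u - g v‖ ≤ L * ‖u - v‖)
    (P : EuclideanSpace ℝ (Fin d) → EuclideanSpace ℝ (Fin d))
    (hP : ∀ z, P z ∈ Q ∧ ∀ y ∈ Q, ‖z - P z‖ ≤ ‖z - y‖)
    (xs : EuclideanSpace ℝ (Fin d)) (hxsQ : xs ∈ Q)
    (hxsVI : ∀ x ∈ Q, 0 ≤ ⟪g xs, x - xs⟫)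
    (lam S : ℕ → ℝ) (x y : ℕ → EuclideanSpace ℝ (Fin d))
    (hlam0 : lam 0 = 1)
    (hS : ∀ k : ℕ, S k = ∑ t ∈ Finset.range (k + 1), lam t)
    (hlam : ∀ k : ℕ, lam (k + 1) = S k / (L / μ))
    (hy0 : y 0 ∈ Q)
    (hx : ∀ k : ℕ,
      x k = P ((S k)⁻¹ • ∑ t ∈ Finset.range (k + 1), lam t • (y t - μ⁻¹ • g (y t))))
    (hy : ∀ k : ℕ, y (k + 1) = P (x k - L⁻¹ • g (x k)))
    (M : ℝ) (hM : ∀ z ∈ Q, ⟪g z, y 0 - z⟫ + 0.5 * μ * ‖y 0 - z‖ ^ 2 ≤ M) :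
    ∀ k : ℕ,
      0.5 * μ * ‖(S k)⁻¹ • (∑ t ∈ Finset.range (k + 1), lam t • y t) - xs‖ ^ 2 ≤
        M * (L / μ) ^ 2 * Real.exp (-(k : ℝ) / (L / μ + 1)) :=
  statement13_general Q hQcv g μ L hμ hμL hmono hlip P hP xs hxsQ hxsVI lam S x y hlam0 hS hlam hy0
    hx hy M hM
end
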